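/- arXiv:2403.02220 — 2 statements merged into one kernel-verified Lean document; each statement's English description precedes it below -/
import Mathlib

section
/- Assume (C1) and E[‖W_1‖_1] < ∞. Then for every l ∈ [L], Σ_{j=1}^n g_l(W_{1l} W_{jl}/T_l(n)) → c_l W_{1l} in probability as n → ∞. -/
/-!
Write `X_j = W_{jl}` and `T_n = X_0 + ⋯ + X_{n-1}`. The weights `y_{n,j} = X_0 X_j / T_n` are
nonnegative and sum to `X_0`, so by (C1) the error `|∑_j g(y_{n,j}) - c X_0|` is at most
`M ∑_j y_{n,j}^{1+ν} ≤ M X_0 (max_j y_{n,j})^ν`. By the strong law `T_n / n → E X_0`, which forces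
`X_n / n → 0` and hence `max_{j<n} X_j = o(n)`; so if `E X_0 > 0` the largest weight tends to
zero almost surely, while if `E X_0 = 0` all weights vanish almost surely. Since `g` need not be
measurable, the error event is dominated by the measurable event where some weight reaches `δ` or
the bound `M ∑_j y_{n,j}^{1+ν}` exceeds `ε`; almost surely this event eventually fails, so its
probability tends to zero.
-/

open MeasureTheory Filter Finset ProbabilityTheory Topology

section SmallWeights

variable {ι : Type*} {g : ℝ → ℝ} {c M δ ν : ℝ}

lemma abs_sum_sub_mul_sum_le (hg : ∀ x, 0 ≤ x → x < δ → |g x - c * x| ≤ M * x ^ (1 + ν))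
    (s : Finset ι) (y : ι → ℝ) (hy : ∀ j ∈ s, 0 ≤ y j ∧ y j < δ) :
    |∑ j ∈ s, g (y j) - c * ∑ j ∈ s, y j| ≤ M * ∑ j ∈ s, y j ^ (1 + ν) := by
  rw [mul_sum, mul_sum, ← sum_sub_distrib]
  exact (abs_sum_le_sum_abs _ _).trans (sum_le_sum fun j hj => hg _ (hy j hj).1 (hy j hj).2)

lemma sum_rpow_one_add_le (hν : 0 ≤ ν) {κ : ℝ} (s : Finset ι) (y : ι → ℝ)
    (hy : ∀ j ∈ s, 0 ≤ y j ∧ y j ≤ κ) :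
    ∑ j ∈ s, y j ^ (1 + ν) ≤ κ ^ ν * ∑ j ∈ s, y j := by
  rw [mul_sum]
  refine sum_le_sum fun j hj => ?_
  obtain ⟨h0, hκ⟩ := hy j hj
  rw [Real.rpow_add' h0 (by linarith : (0 : ℝ) < 1 + ν).ne', Real.rpow_one, mul_comm]
  exact mul_le_mul_of_nonneg_right (Real.rpow_le_rpow h0 hκ hν) h0

lemma exists_pos_lt_mul_rpow_lt (hν : 0 < ν) (hδ : 0 < δ) {ε : ℝ} (hε : 0 < ε) (C : ℝ) :
    ∃ κ, 0 < κ ∧ κ < δ ∧ C * κ ^ ν < ε := by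
  have hlim : Tendsto (fun κ : ℝ => C * κ ^ ν) (𝓝[>] 0) (𝓝 0) := by
    have := ((Real.continuousAt_rpow_const 0 ν (Or.inr hν.le)).tendsto.const_mul C).mono_left
      (nhdsWithin_le_nhds (s := Set.Ioi 0))
    simpa [Real.zero_rpow hν.ne'] using this
  have hsmall : ∀ᶠ κ in 𝓝[>] (0 : ℝ), κ ∈ Set.Ioo 0 δ := Ioo_mem_nhdsGT hδ
  obtain ⟨κ, ⟨hκ0, hκδ⟩, hκ⟩ := (hsmall.and (hlim.eventually (gt_mem_nhds hε))).exists
  exact ⟨κ, hκ0, hκδ, hκ⟩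

end SmallWeights

section PartialSums

variable {x : ℕ → ℝ} {μ : ℝ}

lemma tendsto_div_succ_of_tendsto_sum_div
    (h : Tendsto (fun n : ℕ => (∑ i ∈ range n, x i) / n) atTop (𝓝 μ)) :
    Tendsto (fun n : ℕ => x n / (n + 1)) atTop (𝓝 0) := by
  have hnext : Tendsto (fun n : ℕ => (∑ i ∈ range (n + 1), x i) / ((n + 1 : ℕ) : ℝ)) atTop (𝓝 μ) :=
    h.comp (tendsto_add_atTop_nat 1)
  have hprev := h.mul (tendsto_natCast_div_add_atTop (1 : ℝ))
  rw [mul_one] at hprev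
  -- `x n / (n + 1) = T (n + 1) / (n + 1) - (T n / n) * (n / (n + 1))` with `T n = ∑_{i<n} x i`
  refine (sub_self μ ▸ hnext.sub hprev).congr fun n => ?_
  rcases eq_or_ne n 0 with rfl | hn
  · simp
  · rw [sum_range_succ]
    field_simp
    push_cast
    ring

lemma eventually_forall_lt_le_mul (h : Tendsto (fun n : ℕ => x n / (n + 1)) atTop (𝓝 0))
    {η : ℝ} (hη : 0 < η) : ∀ᶠ n in atTop, ∀ j < n, x j ≤ η * n := by
  obtain ⟨N, hN⟩ := eventually_atTop.1 (h.eventually (gt_mem_nhds hη))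
  obtain ⟨K, hK⟩ := exists_nat_ge ((∑ i ∈ range N, |x i|) / η)
  filter_upwards [eventually_ge_atTop K] with n hKn j hjn
  have hKn : (K : ℝ) ≤ n := by exact_mod_cast hKn
  have hjn : (j : ℝ) + 1 ≤ n := by exact_mod_cast hjn
  rcases lt_or_ge j N with hjN | hjN
  · have hsum : x j ≤ ∑ i ∈ range N, |x i| :=
      (le_abs_self _).trans (single_le_sum (fun i _ => abs_nonneg (x i)) (mem_range.2 hjN))
    rw [div_le_iff₀ hη] at hK
    nlinarith
  · have := hN j hjN
    rw [div_lt_iff₀ (by positivity)] at this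
    nlinarith

lemma sum_mul_div_sum_eq (hx : ∀ i, 0 ≤ x i) {n : ℕ} (hn : 0 < n) :
    ∑ j ∈ range n, x 0 * x j / ∑ i ∈ range n, x i = x 0 := by
  rw [← sum_div, ← mul_sum]
  rcases (sum_nonneg fun i _ => hx i : 0 ≤ ∑ i ∈ range n, x i).eq_or_lt with h0 | hpos
  · have : x 0 = 0 :=
      le_antisymm (h0 ▸ single_le_sum (fun i _ => hx i) (mem_range.2 hn)) (hx 0)
    simp [this]
  · exact mul_div_cancel_right₀ _ hpos.ne'

lemma eventually_forall_lt_mul_div_sum_le (hx : ∀ i, 0 ≤ x i)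
    (h : Tendsto (fun n : ℕ => (∑ i ∈ range n, x i) / n) atTop (𝓝 μ)) (hμ : 0 < μ ∨ x 0 = 0)
    {κ : ℝ} (hκ : 0 < κ) :
    ∀ᶠ n in atTop, ∀ j < n, x 0 * x j / ∑ i ∈ range n, x i ≤ κ := by
  rcases hμ with hμ | hx0
  swap
  · exact Eventually.of_forall fun n j _ => by simp [hx0, hκ.le]
  have hx0 : 0 ≤ x 0 := hx 0
  have hT : ∀ᶠ n : ℕ in atTop, μ / 2 * n < ∑ i ∈ range n, x i := by
    filter_upwards [h.eventually (lt_mem_nhds (half_lt_self hμ)), eventually_gt_atTop 0]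
      with n hn hn0
    rwa [lt_div_iff₀ (by exact_mod_cast hn0)] at hn
  have hη : 0 < κ * μ / (2 * (x 0 + 1)) := by positivity
  filter_upwards [hT, eventually_forall_lt_le_mul (tendsto_div_succ_of_tendsto_sum_div h) hη]
    with n hTn hxn j hj
  have hn : (0 : ℝ) < n := by exact_mod_cast (j.zero_le.trans_lt hj)
  calc x 0 * x j / ∑ i ∈ range n, x i
      ≤ x 0 * (κ * μ / (2 * (x 0 + 1)) * n) / (μ / 2 * n) :=
        div_le_div₀ (by positivity) (mul_le_mul_of_nonneg_left (hxn j hj) hx0) (by positivity)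
          hTn.le
    _ = κ * (x 0 / (x 0 + 1)) := by field_simp
    _ ≤ κ := mul_le_of_le_one_right hκ.le ((div_le_one (by linarith)).2 (by linarith))

lemma eventually_forall_lt_and_mul_sum_rpow_le (hx : ∀ i, 0 ≤ x i)
    (h : Tendsto (fun n : ℕ => (∑ i ∈ range n, x i) / n) atTop (𝓝 μ)) (hμ : 0 < μ ∨ x 0 = 0)
    {M δ ν ε : ℝ} (hM : 0 ≤ M) (hδ : 0 < δ) (hν : 0 < ν) (hε : 0 < ε) :
    ∀ᶠ n in atTop, (∀ j < n, x 0 * x j / ∑ i ∈ range n, x i < δ) ∧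
      M * ∑ j ∈ range n, (x 0 * x j / ∑ i ∈ range n, x i) ^ (1 + ν) ≤ ε := by
  obtain ⟨κ, hκ0, hκδ, hκε⟩ := exists_pos_lt_mul_rpow_lt hν hδ hε (M * x 0)
  filter_upwards [eventually_forall_lt_mul_div_sum_le hx h hμ hκ0, eventually_gt_atTop 0]
    with n hsmall hn
  have hy : ∀ j ∈ range n, 0 ≤ x 0 * x j / ∑ i ∈ range n, x i ∧
      x 0 * x j / ∑ i ∈ range n, x i ≤ κ := fun j hj =>
    ⟨div_nonneg (mul_nonneg (hx 0) (hx j)) (sum_nonneg fun i _ => hx i),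
      hsmall j (mem_range.1 hj)⟩
  refine ⟨fun j hj => (hsmall j hj).trans_lt hκδ, ?_⟩
  calc M * ∑ j ∈ range n, (x 0 * x j / ∑ i ∈ range n, x i) ^ (1 + ν)
      ≤ M * (κ ^ ν * ∑ j ∈ range n, x 0 * x j / ∑ i ∈ range n, x i) :=
        mul_le_mul_of_nonneg_left (sum_rpow_one_add_le hν.le _ _ hy) hM
    _ = M * x 0 * κ ^ ν := by rw [sum_mul_div_sum_eq hx hn]; ring
    _ ≤ ε := hκε.le

end PartialSums

lemma ae_integral_pos_or_eq_zero {Ω : Type*} [MeasurableSpace Ω] {P : Measure Ω} {X : Ω → ℝ}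
    (hX : 0 ≤ X) (hint : Integrable X P) : ∀ᵐ ω ∂P, 0 < P[X] ∨ X ω = 0 := by
  rcases (integral_nonneg hX).lt_or_eq with hpos | hzero
  · exact ae_of_all P fun _ => Or.inl hpos
  · filter_upwards [(integral_eq_zero_iff_of_nonneg hX hint).1 hzero.symm] with ω hω
    exact Or.inr hω

theorem tendsto_measure_lt_abs_sum_sub {Ω : Type*} [MeasurableSpace Ω] {P : Measure Ω}
    [IsProbabilityMeasure P] {X : ℕ → Ω → ℝ} (hmeas : ∀ i, Measurable (X i))
    (hindep : Pairwise (Function.onFun (IndepFun · · P) X))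
    (hident : ∀ i, IdentDistrib (X i) (X 0) P P)
    (hnonneg : ∀ i ω, 0 ≤ X i ω) (hint : Integrable (X 0) P)
    {g : ℝ → ℝ} {c M δ ν : ℝ} (hM : 0 ≤ M) (hδ : 0 < δ) (hν : 0 < ν)
    (hg : ∀ x, 0 ≤ x → x < δ → |g x - c * x| ≤ M * x ^ (1 + ν)) {ε : ℝ} (hε : 0 < ε) :
    Tendsto (fun n : ℕ => P {ω | ε < |∑ j ∈ range n,
        g (X 0 ω * X j ω / ∑ i ∈ range n, X i ω) - c * X 0 ω|}) atTop (𝓝 0) := by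
  set y : ℕ → ℕ → Ω → ℝ := fun n j ω => X 0 ω * X j ω / ∑ i ∈ range n, X i ω
  have hy_meas : ∀ n j, Measurable (y n j) := fun n j =>
    ((hmeas 0).mul (hmeas j)).div (Finset.measurable_sum _ fun i _ => hmeas i)
  set B : ℕ → Set Ω := fun n =>
    (⋃ j ∈ range n, {ω | δ ≤ y n j ω}) ∪ {ω | ε < M * ∑ j ∈ range n, y n j ω ^ (1 + ν)}
    with hB
  have hB_meas : ∀ n, MeasurableSet (B n) := fun n =>
    (MeasurableSet.biUnion (range n).countable_toSet fun j _ =>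
      measurableSet_le measurable_const (hy_meas n j)).union
    (measurableSet_lt measurable_const (measurable_const.mul (Finset.measurable_sum _ fun j _ =>
      (hy_meas n j).pow_const _)))
  have hB_null : ∀ᵐ ω ∂P, ∀ᶠ n in atTop, ω ∉ B n := by
    filter_upwards [strong_law_ae_real X hint hindep hident,
      ae_integral_pos_or_eq_zero (hnonneg 0) hint] with ω hlaw hμ
    filter_upwards [eventually_forall_lt_and_mul_sum_rpow_le (hnonneg · ω) hlaw hμ hM hδ hν hε]
      with n ⟨hsmall, hbound⟩ hbad
    simp only [hB, Set.mem_union, Set.mem_iUnion, Set.mem_ofPred_eq] at hbad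
    rcases hbad with ⟨j, hj, hδj⟩ | hεlt
    · exact (hsmall j (mem_range.1 hj)).not_ge hδj
    · exact hεlt.not_ge hbound
  have hsub : ∀ᶠ n in atTop, {ω | ε < |∑ j ∈ range n, g (y n j ω) - c * X 0 ω|} ⊆ B n := by
    filter_upwards [eventually_gt_atTop 0] with n hn ω hω
    by_contra hω_good
    simp only [hB, Set.mem_union, Set.mem_iUnion, Set.mem_ofPred_eq, not_or, not_exists,
      not_le, not_lt] at hω_good
    have herr := abs_sum_sub_mul_sum_le hg (range n) (y n · ω) fun j _ =>
      ⟨div_nonneg (mul_nonneg (hnonneg 0 ω) (hnonneg j ω)) (sum_nonneg fun i _ => hnonneg i ω),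
        hω_good.1 j ‹_›⟩
    rw [sum_mul_div_sum_eq (hnonneg · ω) hn] at herr
    exact (hω.trans_le (herr.trans hω_good.2)).false
  have hB_lim : Tendsto (fun n => P (B n)) atTop (𝓝 0) := by
    simpa using tendsto_measure_of_ae_tendsto_indicator_of_isFiniteMeasure atTop
      MeasurableSet.empty hB_meas (by simpa using hB_null)
  exact tendsto_of_tendsto_of_tendsto_of_le_of_le' tendsto_const_nhds hB_lim
    (Eventually.of_forall fun _ => zero_le) (hsub.mono fun _ h => measure_mono h)

theorem stmt7_general {Ω : Type} [MeasurableSpace Ω] (P : Measure Ω) [IsProbabilityMeasure P]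
    (L : ℕ)
    (W : ℕ → Ω → Fin L → ℝ)
    (hWmeas : ∀ i, Measurable (W i))
    (hWindep : iIndepFun W P)
    (hWident : ∀ i, Measure.map (W i) P = Measure.map (W 0) P)
    (hWnonneg : ∀ i ω l, 0 ≤ W i ω l)
    (hWint : Integrable (fun ω => ∑ l, W 0 ω l) P)
    (g : Fin L → ℝ → ℝ) (c : Fin L → ℝ) (M δ ν : ℝ)
    (hM : 0 < M) (hδ : 0 < δ) (hν : 0 < ν)
    (hC1 : ∀ l, ∀ x : ℝ, 0 ≤ x → x < δ → |g l x - c l * x| ≤ M * x ^ (1 + ν))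
    (l : Fin L) (ε : ℝ) (hε : 0 < ε) :
    Tendsto (fun n : ℕ =>
        (P {ω | ε < |(∑ j ∈ Finset.range n,
              g l (W 0 ω l * W j ω l / (∑ i ∈ Finset.range n, W i ω l)))
            - c l * W 0 ω l|}).toReal)
      atTop (nhds 0) := by
  have hmeas : ∀ i, Measurable (fun ω => W i ω l) := fun i => (hWmeas i).eval
  have hident : ∀ i, IdentDistrib (fun ω => W i ω l) (fun ω => W 0 ω l) P P := fun i =>
    (⟨(hWmeas i).aemeasurable, (hWmeas 0).aemeasurable, hWident i⟩ :
      IdentDistrib (W i) (W 0) P P).comp (measurable_pi_apply l)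
  have hindep : Pairwise (Function.onFun (IndepFun · · P) fun i ω => W i ω l) :=
    fun i j hij => (hWindep.indepFun hij).comp (measurable_pi_apply l) (measurable_pi_apply l)
  have hint : Integrable (fun ω => W 0 ω l) P :=
    hWint.mono' (hmeas 0).aestronglyMeasurable (ae_of_all P fun ω => by
      rw [Real.norm_eq_abs, abs_of_nonneg (hWnonneg 0 ω l)]
      exact single_le_sum (fun k _ => hWnonneg 0 ω k) (mem_univ l))
  exact ENNReal.toReal_zero ▸ (ENNReal.tendsto_toReal ENNReal.zero_ne_top).comp
    (tendsto_measure_lt_abs_sum_sub hmeas hindep hident (hWnonneg · · l) hint hM.le hδ hν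
      (hC1 l) hε)

/-- Lemma `gconv`: Under (C1) and `E[‖W₁‖₁] < ∞`, for every layer `l`,
`Σ_{j=1}^n g_l(W_{1l} W_{jl}/T_l(n)) → c_l W_{1l}` in probability as `n → ∞`. -/
theorem stmt7 {Ω : Type} [MeasurableSpace Ω] (P : Measure Ω) [IsProbabilityMeasure P]
    (L : ℕ) (hL : 1 ≤ L)
    (W : ℕ → Ω → Fin L → ℝ)
    (hWmeas : ∀ i, Measurable (W i))
    (hWindep : iIndepFun W P)
    (hWident : ∀ i, Measure.map (W i) P = Measure.map (W 0) P)
    (hWnonneg : ∀ i ω l, 0 ≤ W i ω l)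
    (hWcont : ∀ x : Fin L → ℝ, P {ω | W 0 ω = x} = 0)
    (hWint : Integrable (fun ω => ∑ l, W 0 ω l) P)
    (g : Fin L → ℝ → ℝ) (c : Fin L → ℝ) (M δ ν : ℝ)
    (hgnonneg : ∀ l x, 0 ≤ x → 0 ≤ g l x)
    (hc : ∀ l, 0 < c l) (hM : 0 < M) (hδ : 0 < δ) (hν : 0 < ν)
    (hC1 : ∀ l, ∀ x : ℝ, 0 ≤ x → x < δ → |g l x - c l * x| ≤ M * x ^ (1 + ν))
    (l : Fin L) (ε : ℝ) (hε : 0 < ε) :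
    Tendsto (fun n : ℕ =>
        (P {ω | ε < |(∑ j ∈ Finset.range n,
              g l (W 0 ω l * W j ω l / (∑ i ∈ Finset.range n, W i ω l)))
            - c l * W 0 ω l|}).toReal)
      atTop (nhds 0) :=
  stmt7_general P L W hWmeas hWindep hWident hWnonneg hWint g c M δ ν hM hδ hν hC1 l ε hε
end

section
/- For each positive integer m there exist nonnegative constants a_m and C_m, depending only on m, such that for every λ > 0 and every Poisson random variable X with mean λ, E[|X − λ|^m] ≤ a_m λ^{m/2} + C_m. -/
open MeasureTheory ENNReal

noncomputable section

def poissonPMF (r : ℝ) (k : ℕ) : ℝ := Real.exp (-r) * r ^ k / (Nat.factorial k)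

lemma poissonPMF_nonneg (r : ℝ) (hr : 0 ≤ r) (k : ℕ) : 0 ≤ poissonPMF r k := by
  unfold poissonPMF
  positivity

/-- Bound a set lintegral of a function bounded on the set, with no measurability
assumptions on the set or the function. -/
lemma setLIntegral_le_const_mul {α : Type*} [MeasurableSpace α] (μ : Measure α)
    (s : Set α) (h : α → ℝ≥0∞) (c : ℝ≥0∞) (hc : ∀ a ∈ s, h a ≤ c) :
    ∫⁻ a in s, h a ∂μ ≤ c * μ s := by
  rw [MeasureTheory.lintegral_def]
  refine iSup₂_le fun g hg => ?_
  rw [SimpleFunc.lintegral]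
  calc ∑ x ∈ g.range, x * (μ.restrict s) (g ⁻¹' {x})
      ≤ ∑ x ∈ g.range, c * (μ.restrict s) (g ⁻¹' {x}) := by
        refine Finset.sum_le_sum fun x _ => ?_
        rcases eq_or_ne ((μ.restrict s) (g ⁻¹' {x})) 0 with h0 | h0
        · simp [h0]
        · have hne : (g ⁻¹' {x} ∩ s).Nonempty := by
            rw [Set.nonempty_iff_ne_empty]
            intro he
            rw [Measure.restrict_apply (g.measurableSet_fiber x), he] at h0
            simp at h0
          obtain ⟨a, ha1, ha2⟩ := hne
          have hx : x = g a := (Set.mem_singleton_iff.1 ha1).symm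
          exact mul_le_mul_left (hx ▸ le_trans (hg a) (hc a ha2)) _
    _ = c * ∑ x ∈ g.range, (μ.restrict s) (g ⁻¹' {x}) := by rw [Finset.mul_sum]
    _ = c * (μ.restrict s) Set.univ := by
        rw [SimpleFunc.sum_range_measure_preimage_singleton]
    _ = c * μ s := by rw [Measure.restrict_apply_univ]

lemma lintegral_comp_nat_le {Ω : Type} [MeasurableSpace Ω] (P : Measure Ω)
    (X : Ω → ℕ) (g : ℕ → ℝ≥0∞) :
    ∫⁻ ω, g (X ω) ∂P ≤ ∑' k : ℕ, g k * P {ω | X ω = k} := by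
  have hU : (⋃ k : ℕ, {ω | X ω = k}) = Set.univ := by
    ext ω; simp
  calc ∫⁻ ω, g (X ω) ∂P
      = ∫⁻ ω in ⋃ k : ℕ, {ω | X ω = k}, g (X ω) ∂P := by
        rw [hU, Measure.restrict_univ]
    _ ≤ ∑' k : ℕ, ∫⁻ ω in {ω | X ω = k}, g (X ω) ∂P := lintegral_iUnion_le _ _
    _ ≤ ∑' k : ℕ, g k * P {ω | X ω = k} :=
        ENNReal.tsum_le_tsum fun k =>
          setLIntegral_le_const_mul _ _ _ _ (fun a ha => by
            rw [Set.mem_setOf_eq] at ha; rw [ha])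

/-- The exponential series against the Poisson pmf. -/
lemma poisson_exp_summable (lam t : ℝ) :
    Summable (fun k : ℕ => Real.exp (t * k) * poissonPMF lam k) := by
  have h : (fun k : ℕ => Real.exp (t * k) * poissonPMF lam k)
      = fun k : ℕ => Real.exp (-lam) * ((lam * Real.exp t) ^ k / (Nat.factorial k)) := by
    funext k
    unfold poissonPMF
    rw [mul_pow, mul_comm t (k : ℝ), Real.exp_nat_mul]
    ring
  rw [h]
  exact (Real.summable_pow_div_factorial (lam * Real.exp t)).mul_left _

lemma poisson_exp_tsum (lam t : ℝ) :
    ∑' k : ℕ, Real.exp (t * k) * poissonPMF lam k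
      = Real.exp (lam * (Real.exp t - 1)) := by
  have h : (fun k : ℕ => Real.exp (t * k) * poissonPMF lam k)
      = fun k : ℕ => Real.exp (-lam) * ((lam * Real.exp t) ^ k / (Nat.factorial k)) := by
    funext k
    unfold poissonPMF
    rw [mul_pow, mul_comm t (k : ℝ), Real.exp_nat_mul]
    ring
  rw [h, tsum_mul_left]
  have hexp : ∑' k : ℕ, (lam * Real.exp t) ^ k / (Nat.factorial k : ℝ)
      = Real.exp (lam * Real.exp t) := by
    rw [Real.exp_eq_exp_ℝ, NormedSpace.exp_eq_tsum_div]
  rw [hexp, ← Real.exp_add]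
  ring_nf

lemma abs_pow_le_exp (m : ℕ) (s x : ℝ) (hs : 0 < s) :
    |x| ^ m ≤ ((Nat.factorial m : ℝ) / s ^ m) *
      (Real.exp (s * x) + Real.exp (-(s * x))) := by
  have h1 : (s * |x|) ^ m / (Nat.factorial m : ℝ) ≤ Real.exp (s * |x|) :=
    Real.pow_div_factorial_le_exp (x := s * |x|) (by positivity) m
  have h2 : Real.exp (s * |x|) ≤ Real.exp (s * x) + Real.exp (-(s * x)) := by
    rcases abs_cases x with ⟨h, _⟩ | ⟨h, _⟩
    · rw [h]; nlinarith [Real.exp_pos (-(s * x))]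
    · rw [h, mul_neg, ← neg_mul]
      nlinarith [Real.exp_pos (s * x)]
  have hsm : (0:ℝ) < s ^ m := by positivity
  have hfm : (0:ℝ) < (Nat.factorial m : ℝ) := by positivity
  have h3 : (s * |x|) ^ m ≤ (Nat.factorial m : ℝ) *
      (Real.exp (s * x) + Real.exp (-(s * x))) := by
    calc (s * |x|) ^ m = (s * |x|) ^ m / (Nat.factorial m : ℝ) * (Nat.factorial m : ℝ) := by
          field_simp
      _ ≤ Real.exp (s * |x|) * (Nat.factorial m : ℝ) := by
          apply mul_le_mul_of_nonneg_right h1 hfm.le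
      _ ≤ (Real.exp (s * x) + Real.exp (-(s * x))) * (Nat.factorial m : ℝ) := by
          apply mul_le_mul_of_nonneg_right h2 hfm.le
      _ = _ := by ring
  rw [mul_pow] at h3
  rw [div_mul_eq_mul_div, le_div_iff₀ hsm]
  nlinarith [h3]

lemma exp_sub_one_sub_le {s : ℝ} (hs0 : 0 ≤ s) (hs1 : s ≤ 1) :
    Real.exp s - 1 - s ≤ s ^ 2 ∧ Real.exp (-s) - 1 + s ≤ s ^ 2 := by
  have h1 := Real.exp_bound (x := s) (by rw [abs_of_nonneg hs0]; exact hs1) (n := 2) (by norm_num)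
  have h2 := Real.exp_bound (x := -s) (by rw [abs_neg, abs_of_nonneg hs0]; exact hs1)
      (n := 2) (by norm_num)
  rw [abs_of_nonneg hs0] at h1
  rw [abs_neg, abs_of_nonneg hs0] at h2
  simp only [Finset.sum_range_succ, Finset.sum_range_zero] at h1 h2
  norm_num at h1 h2
  constructor
  · have := (abs_sub_le_iff.1 h1).1
    nlinarith [sq_nonneg s]
  · have := (abs_sub_le_iff.1 h2).1
    nlinarith [sq_nonneg s]

/-- Key analytic bound: for suitable `s`, the `m`-th absolute central moment of
Poisson(`lam`) is at most `(m! / s^m) * (2 * e)`. -/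
lemma moment_bound (m : ℕ) (lam s : ℝ) (hl : 0 < lam) (hs : 0 < s) (hs1 : s ≤ 1)
    (hls : lam * s ^ 2 ≤ 1) :
    Summable (fun k : ℕ => |(k : ℝ) - lam| ^ m * poissonPMF lam k) ∧
    ∑' k : ℕ, |(k : ℝ) - lam| ^ m * poissonPMF lam k
      ≤ ((Nat.factorial m : ℝ) / s ^ m) * (2 * Real.exp 1) := by
  set K : ℝ := (Nat.factorial m : ℝ) / s ^ m with hK
  have hK0 : 0 ≤ K := by positivity
  -- the dominating function
  have hf1 : Summable (fun k : ℕ => Real.exp (s * ((k : ℝ) - lam)) * poissonPMF lam k) := by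
    have : (fun k : ℕ => Real.exp (s * ((k : ℝ) - lam)) * poissonPMF lam k)
        = fun k : ℕ => Real.exp (-(s * lam)) * (Real.exp (s * k) * poissonPMF lam k) := by
      funext k
      rw [mul_sub, Real.exp_sub]
      rw [Real.exp_neg]
      field_simp
    rw [this]
    exact (poisson_exp_summable lam s).mul_left _
  have hf2 : Summable (fun k : ℕ => Real.exp (-(s * ((k : ℝ) - lam))) * poissonPMF lam k) := by
    have : (fun k : ℕ => Real.exp (-(s * ((k : ℝ) - lam))) * poissonPMF lam k)
        = fun k : ℕ => Real.exp (s * lam) * (Real.exp (-s * k) * poissonPMF lam k) := by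
      funext k
      have h' : -(s * ((k : ℝ) - lam)) = s * lam + -s * k := by ring
      rw [h', Real.exp_add, mul_assoc]
    rw [this]
    exact (poisson_exp_summable lam (-s)).mul_left _
  have hsum1 : ∑' k : ℕ, Real.exp (s * ((k : ℝ) - lam)) * poissonPMF lam k
      = Real.exp (lam * (Real.exp s - 1 - s)) := by
    have h : (fun k : ℕ => Real.exp (s * ((k : ℝ) - lam)) * poissonPMF lam k)
        = fun k : ℕ => Real.exp (-(s * lam)) * (Real.exp (s * k) * poissonPMF lam k) := by
      funext k
      rw [mul_sub, Real.exp_sub, Real.exp_neg]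
      field_simp
    rw [h, tsum_mul_left, poisson_exp_tsum, ← Real.exp_add]
    ring_nf
  have hsum2 : ∑' k : ℕ, Real.exp (-(s * ((k : ℝ) - lam))) * poissonPMF lam k
      = Real.exp (lam * (Real.exp (-s) - 1 + s)) := by
    have h : (fun k : ℕ => Real.exp (-(s * ((k : ℝ) - lam))) * poissonPMF lam k)
        = fun k : ℕ => Real.exp (s * lam) * (Real.exp (-s * k) * poissonPMF lam k) := by
      funext k
      have h' : -(s * ((k : ℝ) - lam)) = s * lam + -s * k := by ring
      rw [h', Real.exp_add, mul_assoc]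
    rw [h, tsum_mul_left, poisson_exp_tsum, ← Real.exp_add]
    ring_nf
  set G : ℕ → ℝ := fun k : ℕ => K * ((Real.exp (s * ((k : ℝ) - lam))
      + Real.exp (-(s * ((k : ℝ) - lam)))) * poissonPMF lam k) with hG
  have hGsum : Summable G := by
    have : G = fun k : ℕ => K * (Real.exp (s * ((k : ℝ) - lam)) * poissonPMF lam k
        + Real.exp (-(s * ((k : ℝ) - lam))) * poissonPMF lam k) := by
      funext k; rw [hG]; ring
    rw [this]
    exact ((hf1.add hf2).mul_left _)
  have hle : ∀ k : ℕ, |(k : ℝ) - lam| ^ m * poissonPMF lam k ≤ G k := by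
    intro k
    rw [hG]
    have := abs_pow_le_exp m s ((k : ℝ) - lam) hs
    have hp := poissonPMF_nonneg lam hl.le k
    calc |(k : ℝ) - lam| ^ m * poissonPMF lam k
        ≤ (K * (Real.exp (s * ((k : ℝ) - lam)) + Real.exp (-(s * ((k : ℝ) - lam)))))
            * poissonPMF lam k := mul_le_mul_of_nonneg_right this hp
      _ = _ := by ring
  have hnn : ∀ k : ℕ, 0 ≤ |(k : ℝ) - lam| ^ m * poissonPMF lam k := fun k =>
    mul_nonneg (pow_nonneg (abs_nonneg _) m) (poissonPMF_nonneg lam hl.le k)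
  have hS : Summable (fun k : ℕ => |(k : ℝ) - lam| ^ m * poissonPMF lam k) :=
    Summable.of_nonneg_of_le hnn hle hGsum
  refine ⟨hS, ?_⟩
  have hGsum_eq : ∑' k, G k = K * (Real.exp (lam * (Real.exp s - 1 - s))
      + Real.exp (lam * (Real.exp (-s) - 1 + s))) := by
    have : G = fun k : ℕ => K * (Real.exp (s * ((k : ℝ) - lam)) * poissonPMF lam k
        + Real.exp (-(s * ((k : ℝ) - lam))) * poissonPMF lam k) := by
      funext k; rw [hG]; ring
    rw [this, tsum_mul_left, Summable.tsum_add hf1 hf2, hsum1, hsum2]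
  have hEbounds := exp_sub_one_sub_le hs.le hs1
  have hb1 : Real.exp (lam * (Real.exp s - 1 - s)) ≤ Real.exp 1 := by
    apply Real.exp_le_exp.2
    calc lam * (Real.exp s - 1 - s) ≤ lam * s ^ 2 :=
          mul_le_mul_of_nonneg_left hEbounds.1 hl.le
      _ ≤ 1 := hls
  have hb2 : Real.exp (lam * (Real.exp (-s) - 1 + s)) ≤ Real.exp 1 := by
    apply Real.exp_le_exp.2
    calc lam * (Real.exp (-s) - 1 + s) ≤ lam * s ^ 2 :=
          mul_le_mul_of_nonneg_left hEbounds.2 hl.le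
      _ ≤ 1 := hls
  calc ∑' k : ℕ, |(k : ℝ) - lam| ^ m * poissonPMF lam k
      ≤ ∑' k, G k := Summable.tsum_le_tsum hle hS hGsum
    _ = K * (Real.exp (lam * (Real.exp s - 1 - s))
        + Real.exp (lam * (Real.exp (-s) - 1 + s))) := hGsum_eq
    _ ≤ K * (2 * Real.exp 1) := by
        apply mul_le_mul_of_nonneg_left _ hK0
        linarith
    _ = _ := rfl

/-- Lemma `mbound`: For each positive integer `m` there are nonnegative
constants `a_m, C_m`, depending only on `m`, such that for every `λ > 0` and every
Poisson(`λ`) random variable `X`, `E[|X − λ|^m] ≤ a_m λ^{m/2} + C_m`. -/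
theorem stmt9 (m : ℕ) (hm : 0 < m) :
    ∃ a C : ℝ, 0 ≤ a ∧ 0 ≤ C ∧
      ∀ (Ω : Type) (_ : MeasurableSpace Ω) (P : Measure Ω), IsProbabilityMeasure P →
      ∀ (X : Ω → ℕ) (lam : ℝ), 0 < lam →
      (∀ k : ℕ, P {ω | X ω = k} = ENNReal.ofReal (poissonPMF lam k)) →
      ∫⁻ ω, ENNReal.ofReal (|(X ω : ℝ) - lam| ^ m) ∂P
        ≤ ENNReal.ofReal (a * lam ^ ((m : ℝ) / 2) + C) := by
  refine ⟨2 * Real.exp 1 * (Nat.factorial m : ℝ), 2 * Real.exp 1 * (Nat.factorial m : ℝ),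
    by positivity, by positivity, ?_⟩
  intro Ω _ P _ X lam hl hpmf
  set a : ℝ := 2 * Real.exp 1 * (Nat.factorial m : ℝ) with ha
  have ha0 : 0 ≤ a := by positivity
  -- analytic bound on the real series
  have key : Summable (fun k : ℕ => |(k : ℝ) - lam| ^ m * poissonPMF lam k) ∧
      ∑' k : ℕ, |(k : ℝ) - lam| ^ m * poissonPMF lam k
        ≤ a * lam ^ ((m : ℝ) / 2) + a := by
    rcases le_or_gt lam 1 with hcase | hcase
    · obtain ⟨hS, hB⟩ := moment_bound m lam 1 hl one_pos le_rfl (by nlinarith)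
      refine ⟨hS, hB.trans ?_⟩
      have h1 : ((Nat.factorial m : ℝ) / 1 ^ m) * (2 * Real.exp 1) = a := by
        rw [ha]; ring
      rw [h1]
      have : 0 ≤ a * lam ^ ((m : ℝ) / 2) :=
        mul_nonneg ha0 (Real.rpow_nonneg hl.le _)
      linarith
    · set s : ℝ := lam ^ (-(2⁻¹ : ℝ)) with hsdef
      have hs : 0 < s := Real.rpow_pos_of_pos hl _
      have hs1 : s ≤ 1 :=
        Real.rpow_le_one_of_one_le_of_nonpos hcase.le (by norm_num)
      have hls : lam * s ^ 2 = 1 := by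
        rw [hsdef]
        have : (lam ^ (-(2⁻¹ : ℝ))) ^ 2 = lam ^ (-(2⁻¹ : ℝ)) * lam ^ (-(2⁻¹ : ℝ)) := sq _
        rw [this, ← Real.rpow_add hl]
        norm_num
        rw [Real.rpow_neg_one]
        field_simp
      obtain ⟨hS, hB⟩ := moment_bound m lam s hl hs hs1 (le_of_eq hls)
      refine ⟨hS, hB.trans ?_⟩
      have hsm : s ^ m = lam ^ (-((m : ℝ) / 2)) := by
        rw [hsdef, ← Real.rpow_natCast (lam ^ (-(2⁻¹ : ℝ))) m, ← Real.rpow_mul hl.le]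
        norm_num
        ring_nf
      have h2 : ((Nat.factorial m : ℝ) / s ^ m) * (2 * Real.exp 1)
          = a * lam ^ ((m : ℝ) / 2) := by
        have hpos : (0:ℝ) < lam ^ ((m : ℝ) / 2) := Real.rpow_pos_of_pos hl _
        rw [hsm, Real.rpow_neg hl.le, ha]
        field_simp
      rw [h2]
      linarith
  -- now the measure-theoretic part
  calc ∫⁻ ω, ENNReal.ofReal (|(X ω : ℝ) - lam| ^ m) ∂P
      ≤ ∑' k : ℕ, ENNReal.ofReal (|(k : ℝ) - lam| ^ m) * P {ω | X ω = k} :=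
        lintegral_comp_nat_le P X (fun k => ENNReal.ofReal (|(k : ℝ) - lam| ^ m))
    _ = ∑' k : ℕ, ENNReal.ofReal (|(k : ℝ) - lam| ^ m * poissonPMF lam k) := by
        congr 1
        funext k
        rw [hpmf k, ← ENNReal.ofReal_mul (pow_nonneg (abs_nonneg _) m)]
    _ = ENNReal.ofReal (∑' k : ℕ, |(k : ℝ) - lam| ^ m * poissonPMF lam k) := by
        rw [ENNReal.ofReal_tsum_of_nonneg
          (fun k => mul_nonneg (pow_nonneg (abs_nonneg _) m)
            (poissonPMF_nonneg lam hl.le k)) key.1]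
    _ ≤ ENNReal.ofReal (a * lam ^ ((m : ℝ) / 2) + a) := ENNReal.ofReal_le_ofReal key.2
end
end
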